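/- arXiv:1906.00652 — 3 statements merged into one kernel-verified Lean document; each statement's English description precedes it below -/
import Mathlib

section
/- For all natural numbers n ≥ 1, s, and i, the identity ∑_{t=0}^{n-1} C(n-1,t) · C(s,t) · C(t,i) = C(n-1,i) · C(n-1-i+s, n-1) holds, where C(a,b) denotes the binomial coefficient. -/
/-!
Trinomial revision `C(m,t) C(t,i) = C(m,i) C(m-i, m-t)` pulls the factor `C(m,i)` out of the sum,
and what remains, `∑ₜ C(s,t) C(m-i, m-t)`, is Vandermonde's convolution `C(s + (m-i), m)`.
-/

namespace Nat

theorem sum_range_choose_mul_choose_sub (a b k : ℕ) :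
    ∑ t ∈ Finset.range (k + 1), a.choose t * b.choose (k - t) = (a + b).choose k := by
  rw [add_choose_eq, Finset.Nat.sum_antidiagonal_eq_sum_range_succ_mk]

/-- Trinomial revision, with `C(m-i, t-i)` replaced by `C(m-i, m-t)` so that it also holds
for `t < i` (both sides vanish). -/
theorem choose_mul_choose_eq_choose_mul_choose_sub {m t : ℕ} (htm : t ≤ m) (i : ℕ) :
    m.choose t * t.choose i = m.choose i * (m - i).choose (m - t) := by
  rcases lt_or_ge t i with hti | hit
  · rcases lt_or_ge m i with hmi | him
    · simp [choose_eq_zero_of_lt hmi, choose_eq_zero_of_lt hti]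
    · simp [choose_eq_zero_of_lt hti, choose_eq_zero_of_lt (show m - i < m - t by omega)]
  · rw [choose_mul hit, choose_symm_of_eq_add (show m - i = (t - i) + (m - t) by omega)]

end Nat

/-- The Chu–Vandermonde-type identity
`∑_{t=0}^{n-1} C(n-1,t) C(s,t) C(t,i) = C(n-1,i) C(n-1-i+s, n-1)`. -/
theorem chu_vandermonde_betti (n s i : ℕ) (hn : 1 ≤ n) :
    ∑ t ∈ Finset.range n,
        Nat.choose (n - 1) t * Nat.choose s t * Nat.choose t i =
      Nat.choose (n - 1) i * Nat.choose (n - 1 - i + s) (n - 1) := by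
  obtain ⟨m, rfl⟩ : ∃ m, n = m + 1 := ⟨n - 1, by omega⟩
  rw [Nat.add_sub_cancel, add_comm (m - i), ← Nat.sum_range_choose_mul_choose_sub, Finset.mul_sum]
  refine Finset.sum_congr rfl fun t ht => ?_
  rw [mul_right_comm, Nat.choose_mul_choose_eq_choose_mul_choose_sub
    (Nat.lt_succ_iff.mp (Finset.mem_range.mp ht))]
  ring
end

section
/- The minimal monomial generators of the s-th power of the cover ideal of the complete graph K_n are exactly the monomials X^s / w where X = X_1⋯X_n and w ranges over all monomials of degree s in k[X_1,…,X_n]; equivalently, the exponent vectors of minimal generators of J(K_n)^s are exactly the vectors (s - a_1, …, s - a_n) with a_i ≥ 0 and ∑ a_i = s. -/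
/-! The `j`-th coordinate of `∑ k, ((1,…,1) - e_(f k))` is `s` minus the size of the fiber of
`f : Fin s → Fin n` over `j`. Conversely, every `a` with `∑ a = s` is the vector of fiber sizes of
some `f`: enumerate the multiset in which each `i` occurs `a i` times. -/

open Finset

section FiberCard

variable {α ι : Type*} [Fintype α] [DecidableEq ι]

theorem sum_card_fiber_eq_card [Fintype ι] (f : α → ι) : ∑ j, #{k | f k = j} = Fintype.card α :=
  (card_eq_sum_card_fiberwise fun k _ => mem_univ (f k)).symm

theorem sum_ite_eq_zero_else_one_apply (f : α → ι) (j : ι) :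
    (∑ k, fun i : ι => if i = f k then 0 else 1) j = Fintype.card α - #{k | f k = j} := by
  rw [Finset.sum_apply, ← card_univ, ← card_filter_add_card_filter_not (fun k => f k = j)]
  simp [sum_ite, eq_comm]

theorem exists_fin_card_fiber_eq [Fintype ι] {s : ℕ} {a : ι → ℕ} (ha : ∑ i, a i = s) :
    ∃ f : Fin s → ι, ∀ j, #{k | f k = j} = a j := by
  set m : Multiset ι := ∑ i, Multiset.replicate (a i) i
  have hlength : m.toList.length = s := by simp [m, Multiset.card_sum, ha]
  let v : List.Vector ι s := ⟨m.toList, hlength⟩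
  refine ⟨v.get, fun j => ?_⟩
  rw [Fin.card_filter_univ_eq_vector_get_eq_count, List.Vector.toList_mk, ← Multiset.coe_count,
    Multiset.coe_toList]
  simp [m, Multiset.count_sum', Multiset.count_replicate]

end FiberCard

/-- The exponent vectors of the (minimal) monomial generators of `J(K_n)^s`,
i.e. the `s`-fold sums of the vectors `(1,…,1) - e_i` (exponent vectors of the
generators `X_1⋯X_n/X_i` of the cover ideal of the complete graph), are exactly
the vectors `(s - a_1, …, s - a_n)` with `a ∈ ℕ^n`, `∑ a_i = s`. -/
theorem generators_of_power_of_cover_ideal_complete_graph (n s : ℕ) :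
    {v : Fin n → ℕ | ∃ f : Fin s → Fin n,
        v = ∑ k : Fin s, fun j : Fin n => if j = f k then 0 else 1} =
      {v : Fin n → ℕ | ∃ a : Fin n → ℕ, (∑ i, a i = s) ∧ v = fun i => s - a i} := by
  ext v
  constructor
  · rintro ⟨f, rfl⟩
    refine ⟨fun j => #{k | f k = j}, by simpa using sum_card_fiber_eq_card f, ?_⟩
    funext j
    simpa using sum_ite_eq_zero_else_one_apply f j
  · rintro ⟨a, ha, rfl⟩
    obtain ⟨f, hf⟩ := exists_fin_card_fiber_eq ha
    refine ⟨f, funext fun j => ?_⟩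
    simpa [hf] using (sum_ite_eq_zero_else_one_apply f j).symm
end

section
/- Fix s ≥ 1 and n ≥ 2, and order the minimal generators of J(K_n)^s in decreasing reverse lexicographic order u_1 > u_2 > ⋯ > u_r (with X_1 > ⋯ > X_n). For 2 ≤ j ≤ r, write u_j = X^s/v with deg(v) = s. Then the ideal quotient ⟨u_1,…,u_{j-1}⟩ : u_j is generated by the variables { X_i : i < n and i ∈ supp(v) }; in particular J(K_n)^s has linear quotients. -/
/-!
Write `u_b = X^s / X^b`. If `u_b` is revlex-larger than `u_a`, then at the last index `j`
where they differ `a j < b j`; as `∑ b = ∑ a`, some `i` has `b i < a i`, necessarily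
`i < j ≤ n - 1`, and then `u_b ∣ m * u_a` forces `X_i ∣ m`. Conversely, for `i < n - 1`
with `a i ≠ 0`, moving one unit of `a` from `i` to `n - 1` gives a revlex-larger generator
dividing `X_i * u_a`.
-/

open MvPolynomial

/-- `u >_revlex w` for exponent vectors of monomials of the same degree
(with `X_1 > ⋯ > X_n`): at the last index where they differ, `u` has the
smaller exponent. -/
def RevLexGT {n : ℕ} (u w : Fin n → ℕ) : Prop :=
  ∃ i : Fin n, u i < w i ∧ ∀ j : Fin n, i < j → u j = w j

namespace MvPolynomial

variable {σ R : Type*} [CommSemiring R]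

theorem colon_span_monomial_image_eq_span_X_image {T : Set (σ →₀ ℕ)} {t : σ →₀ ℕ}
    {S : Set σ}
    (h_le : ∀ m, ∀ t' ∈ T, t' ≤ m + t → ∃ i ∈ S, m i ≠ 0)
    (h_X : ∀ i ∈ S, ∃ t' ∈ T, t' ≤ Finsupp.single i 1 + t) :
    (Ideal.span ((fun t => monomial t (1 : R)) '' T)).colon (Ideal.span {monomial t (1 : R)}) =
      Ideal.span (X '' S) := by
  apply le_antisymm
  · intro f hf
    rw [Ideal.mem_colon_span_singleton, mem_ideal_span_monomial_image] at hf
    rw [mem_ideal_span_X_image]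
    intro m hm
    have hmt : m + t ∈ (f * monomial t 1).support := by
      rwa [mem_support_iff, coeff_mul_monomial, mul_one, ← mem_support_iff]
    obtain ⟨t', ht', hle⟩ := hf _ hmt
    exact h_le m t' ht' hle
  · rw [Ideal.span_le]
    rintro _ ⟨i, hi, rfl⟩
    obtain ⟨t', ht', hle⟩ := h_X i hi
    have h_split : monomial (Finsupp.single i 1 + t) (1 : R) =
        monomial (Finsupp.single i 1 + t - t') 1 * monomial t' 1 := by
      rw [monomial_mul, one_mul, tsub_add_cancel_of_le hle]
    rw [SetLike.mem_coe, Ideal.mem_colon_span_singleton, X, monomial_mul, one_mul, h_split]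
    exact Ideal.mul_mem_left _ _ (Ideal.subset_span ⟨t', ht', rfl⟩)

end MvPolynomial

theorem apply_le_of_sum_eq {ι : Type*} [Fintype ι] {a : ι → ℕ} {s : ℕ}
    (ha : ∑ i, a i = s) (i : ι) : a i ≤ s :=
  ha ▸ Finset.single_le_sum (fun j _ => Nat.zero_le (a j)) (Finset.mem_univ i)

theorem RevLexGT.exists_lt_of_tsub {n s : ℕ} {a b : Fin n → ℕ}
    (h : RevLexGT (fun i => s - b i) (fun i => s - a i)) (ha : ∑ i, a i = s)
    (hb : ∑ i, b i = s) :
    ∃ i : Fin n, (i : ℕ) < n - 1 ∧ b i < a i := by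
  obtain ⟨j, hj, h_above⟩ := h
  dsimp only at hj h_above
  have hja : a j < b j := by have := apply_le_of_sum_eq ha j; omega
  obtain ⟨i, -, hi⟩ : ∃ i ∈ Finset.univ, b i < a i := by
    by_contra! h
    exact absurd (Finset.sum_lt_sum h ⟨j, Finset.mem_univ j, hja⟩) (by omega)
  have hij : i < j := by
    by_contra! hji
    rcases hji.lt_or_eq with hji | rfl
    · have := h_above i hji
      have := apply_le_of_sum_eq ha i
      have := apply_le_of_sum_eq hb i
      omega
    · omega
  exact ⟨i, by have := j.isLt; have : (i : ℕ) < j := hij; omega, hi⟩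

section MoveUnit

variable {ι : Type*} [Fintype ι] [DecidableEq ι] {s : ℕ} {a : ι → ℕ} {i l : ι}

theorem sum_add_single_tsub_single (hi : a i ≠ 0) :
    ∑ j, (a + Pi.single l 1 - Pi.single i 1 : ι → ℕ) j = ∑ j, a j := by
  have h_pt : ∀ j,
      (a + Pi.single l 1 - Pi.single i 1 : ι → ℕ) j + (Pi.single i 1 : ι → ℕ) j =
        a j + (Pi.single l 1 : ι → ℕ) j := by
    intro j
    rcases eq_or_ne j i with rfl | hj
    · simp only [Pi.sub_apply, Pi.add_apply, Pi.single_eq_same]; omega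
    · simp [hj]
  have := Finset.sum_congr rfl fun j (_ : j ∈ Finset.univ) => h_pt j
  simp only [Finset.sum_add_distrib, Finset.sum_pi_single', Finset.mem_univ, if_true] at this
  omega

theorem tsub_add_single_tsub_single_le (ha : ∑ j, a j = s) (j : ι) :
    s - (a + Pi.single l 1 - Pi.single i 1 : ι → ℕ) j ≤
      (Pi.single i 1 : ι → ℕ) j + (s - a j) := by
  have := apply_le_of_sum_eq ha j
  rcases eq_or_ne j i with rfl | hj
  · simp only [Pi.sub_apply, Pi.add_apply, Pi.single_eq_same]; omega
  · simp only [Pi.sub_apply, Pi.add_apply, Pi.single_eq_of_ne hj]; omega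

end MoveUnit

theorem revLexGT_tsub_add_single_tsub_single {n s : ℕ} {a : Fin n → ℕ} {i l : Fin n}
    (ha : ∑ j, a j = s) (hil : i < l) (hi : a i ≠ 0) :
    RevLexGT (fun j => s - (a + Pi.single l 1 - Pi.single i 1 : Fin n → ℕ) j)
      (fun j => s - a j) := by
  have h_pair : a i + a l ≤ s := ha ▸ Finset.add_le_sum (fun _ _ => Nat.zero_le _)
    (Finset.mem_univ i) (Finset.mem_univ l) hil.ne
  refine ⟨l, ?_, fun j hlj => ?_⟩
  · simp only [Pi.sub_apply, Pi.add_apply, Pi.single_eq_same, Pi.single_eq_of_ne hil.ne']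
    omega
  · simp [(hil.trans hlj).ne', hlj.ne']

theorem cover_ideal_complete_graph_power_linear_quotients_general
    {k : Type*} [Field k] (n s : ℕ)
    (a : Fin n → ℕ) (hsum : ∑ i, a i = s) :
    Submodule.colon
      (Ideal.span {f : MvPolynomial (Fin n) k | ∃ b : Fin n → ℕ,
          (∑ i, b i = s) ∧
          RevLexGT (fun i => s - b i) (fun i => s - a i) ∧
          f = monomial (Finsupp.equivFunOnFinite.symm fun i => s - b i) 1})
      (Ideal.span {monomial (Finsupp.equivFunOnFinite.symm fun i => s - a i) (1 : k)}) =
    Ideal.span {f : MvPolynomial (Fin n) k |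
        ∃ i : Fin n, (i : ℕ) < n - 1 ∧ a i ≠ 0 ∧ f = X i} := by
  set T : Set (Fin n →₀ ℕ) := {t | ∃ b : Fin n → ℕ, ∑ i, b i = s ∧
    RevLexGT (fun i => s - b i) (fun i => s - a i) ∧
    t = Finsupp.equivFunOnFinite.symm fun i => s - b i}
  have h_gens : {f : MvPolynomial (Fin n) k | ∃ b : Fin n → ℕ, (∑ i, b i = s) ∧
      RevLexGT (fun i => s - b i) (fun i => s - a i) ∧
      f = monomial (Finsupp.equivFunOnFinite.symm fun i => s - b i) 1} =
      (fun t => monomial t 1) '' T := by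
    ext; simp [T, and_assoc, eq_comm]
  have h_vars :
      {f : MvPolynomial (Fin n) k | ∃ i : Fin n, (i : ℕ) < n - 1 ∧ a i ≠ 0 ∧ f = X i} =
        X '' {i : Fin n | (i : ℕ) < n - 1 ∧ a i ≠ 0} := by
    ext; simp [and_assoc, eq_comm]
  rw [h_gens, h_vars]
  refine colon_span_monomial_image_eq_span_X_image ?_ ?_
  · rintro m _ ⟨b, hb, h_rev, rfl⟩ h_le
    obtain ⟨i, hi, hba⟩ := h_rev.exists_lt_of_tsub hsum hb
    have h_le_i : s - b i ≤ m i + (s - a i) := by simpa using Finsupp.le_def.mp h_le i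
    exact ⟨i, ⟨hi, by omega⟩, by have := apply_le_of_sum_eq hsum i; omega⟩
  · rintro i ⟨hi, hai⟩
    let l : Fin n := ⟨n - 1, by omega⟩
    refine ⟨_, ⟨a + Pi.single l 1 - Pi.single i 1, (sum_add_single_tsub_single hai).trans hsum,
      revLexGT_tsub_add_single_tsub_single hsum hi hai, rfl⟩, fun j => ?_⟩
    simpa [Finsupp.single_eq_pi_single] using tsub_add_single_tsub_single_le (l := l) hsum j

/-- Linear quotients of `J(K_n)^s` in the reverse lexicographic order: the
minimal generators of `J(K_n)^s` are `u_a = X^s / X^a` for exponent vectors `a`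
with `∑ a = s`.  If `u_a` is not the revlex-largest generator (i.e. `a i ≠ 0`
for some `i < n`), then the colon ideal of the span of the revlex-larger
generators by `u_a` is generated by the variables `{X_i : i < n, i ∈ supp(a)}`;
in particular `J(K_n)^s` has linear quotients. -/
theorem cover_ideal_complete_graph_power_linear_quotients
    {k : Type*} [Field k] (n s : ℕ) (hn : 2 ≤ n) (hs : 1 ≤ s)
    (a : Fin n → ℕ) (hsum : ∑ i, a i = s)
    (hnt : ∃ i : Fin n, (i : ℕ) < n - 1 ∧ a i ≠ 0) :
    Submodule.colon
      (Ideal.span {f : MvPolynomial (Fin n) k | ∃ b : Fin n → ℕ,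
          (∑ i, b i = s) ∧
          RevLexGT (fun i => s - b i) (fun i => s - a i) ∧
          f = monomial (Finsupp.equivFunOnFinite.symm fun i => s - b i) 1})
      (Ideal.span {monomial (Finsupp.equivFunOnFinite.symm fun i => s - a i) (1 : k)}) =
    Ideal.span {f : MvPolynomial (Fin n) k |
        ∃ i : Fin n, (i : ℕ) < n - 1 ∧ a i ≠ 0 ∧ f = X i} :=
  cover_ideal_complete_graph_power_linear_quotients_general n s a hsum
end
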